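/- arXiv:2406.03142 — 3 statements merged into one kernel-verified Lean document; each statement's English description precedes it below -/
import Mathlib

section
/- For the specific distribution P on {x1,x2} × {A,D} × {0,1} given by P(x1,A,1)=3/8, P(x1,A,0)=1/8, P(x1,D,1)=1/8, P(x1,D,0)=1/8, P(x2,D,0)=1/4 (and 0 elsewhere), the only deterministic classifiers satisfying Demographic Parity are the constant-0 and constant-1 classifiers, each with 0-1 loss 1/2, while the randomized classifier f with f(x1,A)=1/2, f(x1,D)=1, f(x2,A)=f(x2,D)=0 satisfies Demographic Parity and has 0-1 loss 3/8. -/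
open Finset

/-- `P` is a probability distribution on `X × Z × Y` with `Z = Bool` (group, `true` = A,
`false` = D) and `Y = Bool` (label, `true` = 1). -/
def IsDist {X : Type*} [Fintype X] (P : X × Bool × Bool → ℝ) : Prop :=
  (∀ p, 0 ≤ P p) ∧ ∑ p : X × Bool × Bool, P p = 1

/-- mass of the feature-group cell `(x, z)`. -/
noncomputable def cellMass {X : Type*} (P : X × Bool × Bool → ℝ) (x : X) (z : Bool) : ℝ :=
  P (x, z, false) + P (x, z, true)

/-- total mass of group `z`. -/
noncomputable def gMass {X : Type*} [Fintype X] (P : X × Bool × Bool → ℝ) (z : Bool) : ℝ :=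
  ∑ x, cellMass P x z

/-- score of the cell `(x, z)`: `Pr[Y = 1 | X = x, Z = z]`. -/
noncomputable def score {X : Type*} (P : X × Bool × Bool → ℝ) (x : X) (z : Bool) : ℝ :=
  P (x, z, true) / cellMass P x z

/-- A randomized classifier takes values in `[0,1]`. -/
def InUnit {X : Type*} (f : X × Bool → ℝ) : Prop := ∀ p, f p ∈ Set.Icc (0 : ℝ) 1

/-- selection rate of randomized classifier `f` on group `z`: `E[f(X,Z) | Z = z]`. -/
noncomputable def selRate {X : Type*} [Fintype X] (P : X × Bool × Bool → ℝ) (f : X × Bool → ℝ)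
    (z : Bool) : ℝ :=
  (∑ x, f (x, z) * cellMass P x z) / gMass P z

/-- 0-1 loss of randomized classifier `f` under `P`. -/
noncomputable def loss {X : Type*} [Fintype X] (P : X × Bool × Bool → ℝ) (f : X × Bool → ℝ) : ℝ :=
  ∑ x, ∑ z, (P (x, z, true) * (1 - f (x, z)) + P (x, z, false) * f (x, z))

/-- Demographic parity: equal selection rates on the two groups. -/
def DP {X : Type*} [Fintype X] (P : X × Bool × Bool → ℝ) (f : X × Bool → ℝ) : Prop :=
  selRate P f true = selRate P f false

/-- false positive rate of `f` on group `z`: `E[f(X,Z) | Y = 0, Z = z]`. -/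
noncomputable def fpr {X : Type*} [Fintype X] (P : X × Bool × Bool → ℝ) (f : X × Bool → ℝ)
    (z : Bool) : ℝ :=
  (∑ x, f (x, z) * P (x, z, false)) / (∑ x, P (x, z, false))

/-- `f` is a (group-wise) mass-threshold classifier: within each group it accepts a
prefix of the cells sorted in decreasing order of score (fractionally at the boundary). -/
def IsPrefix {X : Type*} (P : X × Bool × Bool → ℝ) (f : X × Bool → ℝ) : Prop :=
  ∀ z x x', 0 < cellMass P x z → 0 < cellMass P x' z →
    score P x' z < score P x z → 0 < f (x', z) → f (x, z) = 1

/-- cells of equal score within a group have been merged, i.e. scores of distinct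
positive-mass cells within a group are distinct ("strictly decreasing" when sorted). -/
def MergedScores {X : Type*} (P : X × Bool × Bool → ℝ) : Prop :=
  ∀ z x x', 0 < cellMass P x z → 0 < cellMass P x' z → score P x z = score P x' z → x = x'

/-- The distribution of Example 1: `x1 = 0`, `x2 = 1`, `A = true`, `D = false`,
label `1 = true`. -/
noncomputable def Pex : Fin 2 × Bool × Bool → ℝ := fun p =>
  if p = (0, true, true) then 3/8
  else if p = (0, true, false) then 1/8
  else if p = (0, false, true) then 1/8
  else if p = (0, false, false) then 1/8
  else if p = (1, false, false) then 1/4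
  else 0

/-- The randomized classifier `f(x1,A) = 1/2`, `f(x1,D) = 1`, `f(x2,·) = 0`. -/
noncomputable def fEx : Fin 2 × Bool → ℝ := fun p =>
  if p = (0, true) then 1/2 else if p = (0, false) then 1 else 0

/-! Since `x1` carries all of the `A`-mass and each `D`-cell half of the `D`-mass, demographic
parity reads `2 f(x1,A) = f(x1,D) + f(x2,D)`; for a `0/1`-valued `f` this forces the three values
on the support to agree. -/

theorem loss_const_zero {X : Type*} [Fintype X] (P : X × Bool × Bool → ℝ) :
    loss P (fun _ => 0) = ∑ x, ∑ z, P (x, z, true) := by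
  simp [loss]

theorem loss_const_one {X : Type*} [Fintype X] (P : X × Bool × Bool → ℝ) :
    loss P (fun _ => 1) = ∑ x, ∑ z, P (x, z, false) := by
  simp [loss]

theorem eq_of_mem_zero_one_of_two_mul_eq_add {a b c : ℝ} (ha : a = 0 ∨ a = 1)
    (hb : b = 0 ∨ b = 1) (hc : c = 0 ∨ c = 1) (h : 2 * a = b + c) : b = a ∧ c = a := by
  rcases ha with rfl | rfl <;> rcases hb with rfl | rfl <;> rcases hc with rfl | rfl <;>
    constructor <;> linarith

theorem cellMass_Pex_pos_iff (x : Fin 2) (z : Bool) :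
    0 < cellMass Pex x z ↔ (x, z) ≠ (1, true) := by
  fin_cases x <;> cases z <;> norm_num [cellMass, Pex]

theorem gMass_Pex (z : Bool) : gMass Pex z = 1 / 2 := by
  cases z <;> norm_num [gMass, cellMass, Pex, Fin.sum_univ_two]

theorem dp_Pex_iff (f : Fin 2 × Bool → ℝ) :
    DP Pex f ↔ 2 * f (0, true) = f (0, false) + f (1, false) := by
  simp only [DP, selRate, gMass_Pex, Fin.sum_univ_two]
  norm_num [cellMass, Pex]
  constructor <;> intro h <;> linarith

theorem eq_on_support_Pex {f : Fin 2 × Bool → ℝ} {a : ℝ} (h₀ : f (0, true) = a)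
    (h₁ : f (0, false) = a) (h₂ : f (1, false) = a) :
    ∀ p : Fin 2 × Bool, 0 < cellMass Pex p.1 p.2 → f p = a := by
  rintro ⟨x, z⟩ hp
  rw [cellMass_Pex_pos_iff] at hp
  fin_cases x <;> cases z <;> simp_all

/-- On `Pex`, the only deterministic DP-fair classifiers are (on positive-mass points)
the constant `0` and constant `1` classifiers, each of loss `1/2`, while the randomized
classifier `fEx` is DP-fair with loss `3/8`. -/
theorem stmt1 :
    (∀ f : Fin 2 × Bool → ℝ, (∀ p, f p = 0 ∨ f p = 1) → DP Pex f →
      ((∀ p : Fin 2 × Bool, 0 < cellMass Pex p.1 p.2 → f p = 0) ∨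
       (∀ p : Fin 2 × Bool, 0 < cellMass Pex p.1 p.2 → f p = 1))) ∧
    loss Pex (fun _ => 0) = 1/2 ∧
    loss Pex (fun _ => 1) = 1/2 ∧
    InUnit fEx ∧ DP Pex fEx ∧ loss Pex fEx = 3/8 := by
  refine ⟨fun f hdet hdp => ?_, ?_, ?_, ?_, ?_, ?_⟩
  · obtain ⟨h₁, h₂⟩ := eq_of_mem_zero_one_of_two_mul_eq_add (hdet _) (hdet _) (hdet _)
      ((dp_Pex_iff f).1 hdp)
    rcases hdet (0, true) with h₀ | h₀
    · exact .inl (eq_on_support_Pex h₀ (h₁.trans h₀) (h₂.trans h₀))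
    · exact .inr (eq_on_support_Pex h₀ (h₁.trans h₀) (h₂.trans h₀))
  · rw [loss_const_zero]; norm_num [Pex, Fin.sum_univ_two]
  · rw [loss_const_one]; norm_num [Pex, Fin.sum_univ_two]
  · rintro ⟨x, z⟩; fin_cases x <;> cases z <;> norm_num [fEx]
  · rw [dp_Pex_iff]; norm_num [fEx]
  · norm_num [loss, Pex, fEx, Fin.sum_univ_two]
end

section
/- On each interval [r_{i−}, r_i] between consecutive score boundaries, the loss L(T̃_{r_{i−}+k}) equals L(T̃_{r_{i−}}) + k(1 − 2S(C_i)), where C_i is the cell of mass accepted between thresholds r_{i−} and r_i and S(C_i) is its score; in particular the slope of r ↦ L(T̃_r) on that interval is 1 − 2S(C_i). -/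
/-!
The 0-1 loss is affine in the randomized classifier: moving mass `f₂ - f₁` from rejection to
acceptance adds its `Y = 0` mass and removes its `Y = 1` mass, so
`L(f₂) - L(f₁) = mass(C) - 2 · mass(C ∩ {Y = 1}) = mass(C) (1 - 2 S(C))`.
Since each group's selection rate rises by `k` and the group masses add up to `1`,
the cell `C` has mass exactly `k`.
-/

open Finset

section

variable {X : Type*} [Fintype X] (P : X × Bool × Bool → ℝ)

theorem sum_gMass : ∑ z, gMass P z = ∑ p, P p := by
  simp only [gMass, cellMass, Fintype.sum_prod_type, Fintype.sum_bool, ← sum_add_distrib]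
  exact sum_congr rfl fun _ _ => by ring

theorem sum_mul_cellMass_eq_selRate_mul_gMass (f : X × Bool → ℝ) {z : Bool}
    (hz : gMass P z ≠ 0) :
    ∑ x, f (x, z) * cellMass P x z = selRate P f z * gMass P z :=
  (div_mul_cancel₀ _ hz).symm

theorem loss_sub_loss (f g : X × Bool → ℝ) :
    loss P g - loss P f =
      ∑ x, ∑ z, (g (x, z) - f (x, z)) * cellMass P x z
        - 2 * ∑ x, ∑ z, (g (x, z) - f (x, z)) * P (x, z, true) := by
  simp only [loss, cellMass, ← sum_sub_distrib, mul_sum]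
  exact sum_congr rfl fun _ _ => sum_congr rfl fun _ _ => by ring

theorem sum_sub_mul_cellMass_of_selRate (hP : ∑ p, P p = 1) (hmass : ∀ z, gMass P z ≠ 0)
    {f g : X × Bool → ℝ} {r k : ℝ} (hf : ∀ z, selRate P f z = r)
    (hg : ∀ z, selRate P g z = r + k) :
    ∑ x, ∑ z, (g (x, z) - f (x, z)) * cellMass P x z = k := by
  have hgroup : ∀ z, ∑ x, (g (x, z) - f (x, z)) * cellMass P x z = k * gMass P z := by
    intro z
    simp only [sub_mul, sum_sub_distrib, sum_mul_cellMass_eq_selRate_mul_gMass P _ (hmass z),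
      hf, hg]
    ring
  rw [sum_comm, Fintype.sum_congr _ _ hgroup, ← mul_sum, sum_gMass, hP, mul_one]

end

theorem stmt5_general {X : Type*} [Fintype X] (P : X × Bool × Bool → ℝ) (hP : IsDist P)
    (hg : ∀ z, 0 < gMass P z) (r k : ℝ) (hk : 0 < k)
    (f₁ f₂ : X × Bool → ℝ)
    (h₁r : ∀ z, selRate P f₁ z = r)
    (h₂r : ∀ z, selRate P f₂ z = r + k)
    (S : ℝ)
    (hS : S = (∑ x, ∑ z, (f₂ (x, z) - f₁ (x, z)) * P (x, z, true)) /
              (∑ x, ∑ z, (f₂ (x, z) - f₁ (x, z)) * cellMass P x z)) :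
    loss P f₂ = loss P f₁ + k * (1 - 2 * S) := by
  have hmass : ∑ x, ∑ z, (f₂ (x, z) - f₁ (x, z)) * cellMass P x z = k :=
    sum_sub_mul_cellMass_of_selRate P hP.2 (fun z => (hg z).ne') h₁r h₂r
  have hpos : ∑ x, ∑ z, (f₂ (x, z) - f₁ (x, z)) * P (x, z, true) = k * S := by
    rw [hS, hmass, mul_div_cancel₀ _ hk.ne']
  linarith [loss_sub_loss P f₁ f₂]

/-- On any interval of thresholds, if `f₁, f₂` are nested mass-threshold classifiers of
selection rates `r` and `r + k`, and `S` is the score of the cell of mass accepted by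
`f₂` but not `f₁`, then `L(T̃_{r+k}) = L(T̃_r) + k (1 - 2 S)`; in particular the slope
of `r ↦ L(T̃_r)` between consecutive score boundaries is `1 - 2 S(Cᵢ)`. -/
theorem stmt5 {X : Type*} [Fintype X] (P : X × Bool × Bool → ℝ) (hP : IsDist P)
    (hg : ∀ z, 0 < gMass P z) (r k : ℝ) (hr : 0 ≤ r) (hk : 0 < k) (hrk : r + k ≤ 1)
    (f₁ f₂ : X × Bool → ℝ)
    (h₁u : InUnit f₁) (h₁p : IsPrefix P f₁) (h₁r : ∀ z, selRate P f₁ z = r)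
    (h₂u : InUnit f₂) (h₂p : IsPrefix P f₂) (h₂r : ∀ z, selRate P f₂ z = r + k)
    (hle : ∀ p, f₁ p ≤ f₂ p)
    (S : ℝ)
    (hS : S = (∑ x, ∑ z, (f₂ (x, z) - f₁ (x, z)) * P (x, z, true)) /
              (∑ x, ∑ z, (f₂ (x, z) - f₁ (x, z)) * cellMass P x z)) :
    loss P f₂ = loss P f₁ + k * (1 - 2 * S) :=
  stmt5_general P hP hg r k hk f₁ f₂ h₁r h₂r S hS
end

section
/- Among all randomized classifiers whose false positive rate equals r on both groups (hence satisfying Predictive Equality), the group-wise mass-threshold classifier f_r achieving FPR r on each group minimizes the 0-1 loss; any such classifier differing from f_r on a set of positive probability has strictly larger loss. -/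
open Finset

/-! Within each group a mass-threshold classifier is a likelihood-ratio test: for some `c ≥ 0` it
accepts the cells with `P(x,z,1) > c P(x,z,0)` and rejects those with `P(x,z,1) < c P(x,z,0)`.
Equal false positive rates mean equal mass on negatives in each group, so the loss gap in
group `z` is `∑ₓ (f - g) (P(x,z,1) - c P(x,z,0)) ≥ 0` (Neyman–Pearson). If the gap vanishes,
`f` and `g` differ only on boundary cells `P(x,z,1) = c P(x,z,0)`; these all have score
`c / (1 + c)`, so by merged scores there is at most one of them, and a difference there would
change the false positive rate. -/

section LikelihoodRatioTest

variable {ι : Type*} {p₀ p₁ f g : ι → ℝ} {c : ℝ}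

def IsLikelihoodRatioTest (p₀ p₁ : ι → ℝ) (c : ℝ) (f : ι → ℝ) : Prop :=
  ∀ i, (c * p₀ i < p₁ i → f i = 1) ∧ (p₁ i < c * p₀ i → f i = 0)

lemma IsLikelihoodRatioTest.sub_mul_nonneg (hf : IsLikelihoodRatioTest p₀ p₁ c f)
    (hg : ∀ i, g i ∈ Set.Icc 0 1) (i : ι) : 0 ≤ (f i - g i) * (p₁ i - c * p₀ i) := by
  obtain ⟨hg0, hg1⟩ := hg i
  rcases lt_trichotomy (c * p₀ i) (p₁ i) with hlt | heq | hgt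
  · rw [(hf i).1 hlt]
    exact mul_nonneg (sub_nonneg.2 hg1) (sub_nonneg.2 hlt.le)
  · rw [heq, sub_self, mul_zero]
  · rw [(hf i).2 hgt]
    exact mul_nonneg_of_nonpos_of_nonpos (by linarith) (sub_nonpos.2 hgt.le)

variable [Fintype ι]

lemma sum_mul_sub_sum_mul_eq (h : ∑ i, f i * p₀ i = ∑ i, g i * p₀ i) (c : ℝ) :
    ∑ i, f i * p₁ i - ∑ i, g i * p₁ i = ∑ i, (f i - g i) * (p₁ i - c * p₀ i) := by
  calc ∑ i, f i * p₁ i - ∑ i, g i * p₁ i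
      = ∑ i, f i * p₁ i - ∑ i, g i * p₁ i
          - c * (∑ i, f i * p₀ i - ∑ i, g i * p₀ i) := by
        rw [h, sub_self, mul_zero, sub_zero]
    _ = ∑ i, (f i - g i) * (p₁ i - c * p₀ i) := by
        simp only [← sum_sub_distrib, mul_sum]
        exact sum_congr rfl fun i _ => by ring

/-- The Neyman–Pearson lemma. -/
lemma IsLikelihoodRatioTest.sum_mul_le (hf : IsLikelihoodRatioTest p₀ p₁ c f)
    (hg : ∀ i, g i ∈ Set.Icc 0 1) (h : ∑ i, f i * p₀ i = ∑ i, g i * p₀ i) :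
    ∑ i, g i * p₁ i ≤ ∑ i, f i * p₁ i := by
  rw [← sub_nonneg, sum_mul_sub_sum_mul_eq h c]
  exact sum_nonneg fun i _ => hf.sub_mul_nonneg hg i

lemma IsLikelihoodRatioTest.sum_mul_lt (hf : IsLikelihoodRatioTest p₀ p₁ c f)
    (hg : ∀ i, g i ∈ Set.Icc 0 1) (h : ∑ i, f i * p₀ i = ∑ i, g i * p₀ i)
    (hb : {i | p₀ i ≠ 0 ∧ p₁ i = c * p₀ i}.Subsingleton)
    {i : ι} (hi : p₀ i ≠ 0 ∨ p₁ i ≠ 0) (hfg : f i ≠ g i) :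
    ∑ i, g i * p₁ i < ∑ i, f i * p₁ i := by
  refine lt_of_le_of_ne (hf.sum_mul_le hg h) fun hsum => ?_
  have hzero : ∀ j, (f j - g j) * (p₁ j - c * p₀ j) = 0 := by
    have := sum_mul_sub_sum_mul_eq (p₁ := p₁) h c
    rw [hsum, sub_self, eq_comm, sum_eq_zero_iff_of_nonneg fun j _ => hf.sub_mul_nonneg hg j]
      at this
    exact fun j => this j (mem_univ j)
  have hbdry : ∀ j, f j ≠ g j → p₁ j = c * p₀ j := fun j hj =>
    sub_eq_zero.1 ((mul_eq_zero.1 (hzero j)).resolve_left (sub_ne_zero.2 hj))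
  have hi₀ : p₀ i ≠ 0 := fun h0 => by
    have := hbdry i hfg
    rw [h0, mul_zero] at this
    exact hi.elim (· h0) (· this)
  have hsingle : ∑ j, (f j - g j) * p₀ j = (f i - g i) * p₀ i := by
    refine sum_eq_single i (fun j _ hji => ?_) fun h => (h (mem_univ i)).elim
    by_cases hj : f j = g j
    · rw [hj, sub_self, zero_mul]
    · have : p₀ j = 0 := by
        by_contra hj₀
        exact hji (hb ⟨hj₀, hbdry j hj⟩ ⟨hi₀, hbdry i hfg⟩)
      rw [this, mul_zero]
  have hdiff : ∑ j, (f j - g j) * p₀ j = 0 := by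
    simp only [sub_mul, sum_sub_distrib, h, sub_self]
  exact mul_ne_zero (sub_ne_zero.2 hfg) hi₀ (hsingle ▸ hdiff)

end LikelihoodRatioTest

section Fairness

variable {X : Type*} {P : X × Bool × Bool → ℝ}

lemma cellMass_nonneg (hP : ∀ p, 0 ≤ P p) (x : X) (z : Bool) : 0 ≤ cellMass P x z :=
  add_nonneg (hP _) (hP _)

lemma score_le_one (hP : ∀ p, 0 ≤ P p) {x : X} {z : Bool} : score P x z ≤ 1 :=
  div_le_one_of_le₀ (le_add_of_nonneg_left (hP _)) (cellMass_nonneg hP x z)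

lemma lt_score_iff {x : X} {z : Bool} {t : ℝ} (hx : 0 < cellMass P x z) (ht : t < 1) :
    t < score P x z ↔ t / (1 - t) * P (x, z, false) < P (x, z, true) := by
  rw [score, lt_div_iff₀ hx, cellMass, div_mul_eq_mul_div, div_lt_iff₀ (sub_pos.2 ht)]
  constructor <;> intro h <;> linarith

lemma score_lt_iff {x : X} {z : Bool} {t : ℝ} (hx : 0 < cellMass P x z) (ht : t < 1) :
    score P x z < t ↔ P (x, z, true) < t / (1 - t) * P (x, z, false) := by
  rw [score, div_lt_iff₀ hx, cellMass, div_mul_eq_mul_div, lt_div_iff₀ (sub_pos.2 ht)]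
  constructor <;> intro h <;> linarith

lemma score_eq_of_eq_mul {x : X} {z : Bool} {c : ℝ} (hc : 0 ≤ c) (h₀ : P (x, z, false) ≠ 0)
    (h : P (x, z, true) = c * P (x, z, false)) : score P x z = c / (1 + c) := by
  have : 1 + c ≠ 0 := by positivity
  rw [score, cellMass, h, div_eq_div_iff (by rw [← one_add_mul]; positivity) this]
  ring

lemma MergedScores.subsingleton_boundary (hm : MergedScores P) (hP : ∀ p, 0 ≤ P p) {c : ℝ}
    (hc : 0 ≤ c) (z : Bool) :
    {x | P (x, z, false) ≠ 0 ∧ P (x, z, true) = c * P (x, z, false)}.Subsingleton := by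
  have hmass : ∀ x, P (x, z, false) ≠ 0 → P (x, z, true) = c * P (x, z, false) →
      0 < cellMass P x z := fun x h₀ h => by
    rw [cellMass, h]
    have := (hP (x, z, false)).lt_of_ne' h₀
    positivity
  rintro x ⟨hx₀, hx⟩ y ⟨hy₀, hy⟩
  exact hm z x y (hmass x hx₀ hx) (hmass y hy₀ hy)
    ((score_eq_of_eq_mul hc hx₀ hx).trans (score_eq_of_eq_mul hc hy₀ hy).symm)

variable [Fintype X]

/-- The threshold is `t / (1 - t)`, where `t < 1` is the largest score of a positive-mass cell
that `f` does not fully accept. -/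
lemma IsPrefix.exists_isLikelihoodRatioTest {f : X × Bool → ℝ} (hP : ∀ p, 0 ≤ P p)
    (hf1 : InUnit f) (hf2 : IsPrefix P f)
    (hf4 : ∀ x z, 0 < cellMass P x z → score P x z = 1 → f (x, z) = 1) (z : Bool) :
    ∃ c, 0 ≤ c ∧ IsLikelihoodRatioTest (fun x => P (x, z, false)) (fun x => P (x, z, true)) c
      (fun x => f (x, z)) := by
  classical
  have hmass : ∀ x c, c * P (x, z, false) ≠ P (x, z, true) → 0 < cellMass P x z := by
    intro x c hne
    refine (cellMass_nonneg hP x z).lt_of_ne fun h0 => hne ?_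
    obtain ⟨h₀, h₁⟩ := (add_eq_zero_iff_of_nonneg (hP _) (hP _)).1 h0.symm
    rw [h₀, h₁, mul_zero]
  have heq_one : ∀ x, ¬ f (x, z) < 1 → f (x, z) = 1 := fun x h =>
    le_antisymm (hf1 _).2 (not_lt.1 h)
  set A := univ.filter fun x => 0 < cellMass P x z ∧ f (x, z) < 1
  rcases A.eq_empty_or_nonempty with hA | hA
  · refine ⟨0, le_rfl, fun x => ⟨fun hlt => heq_one x fun hf => ?_, fun hlt => ?_⟩⟩
    · have hx : x ∈ A := mem_filter.2 ⟨mem_univ x, hmass x 0 hlt.ne, hf⟩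
      simp [hA] at hx
    · rw [zero_mul] at hlt
      exact absurd hlt (not_lt.2 (hP _))
  obtain ⟨a, ha, hmax⟩ := A.exists_max_image (fun x => score P x z) hA
  obtain ⟨-, ha_mass, ha_lt⟩ := mem_filter.1 ha
  set t := score P a z
  have ht : t < 1 := (score_le_one hP).lt_of_ne fun h => ha_lt.ne (hf4 a z ha_mass h)
  have hc : 0 ≤ t / (1 - t) := div_nonneg (div_nonneg (hP _) ha_mass.le) (sub_pos.2 ht).le
  refine ⟨t / (1 - t), hc, fun x => ⟨fun hlt => heq_one x fun hf => ?_, fun hlt => ?_⟩⟩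
  · have hx := hmass x _ hlt.ne
    exact (not_le.2 ((lt_score_iff hx ht).2 hlt)) (hmax x (mem_filter.2 ⟨mem_univ x, hx, hf⟩))
  · have hx := hmass x _ hlt.ne'
    by_contra hf
    exact ha_lt.ne (hf2 z a x ha_mass hx ((score_lt_iff hx ht).2 hlt)
      ((hf1 _).1.lt_of_ne' hf))

lemma sum_mul_eq_of_fpr_eq (hP : ∀ p, 0 ≤ P p) {f g : X × Bool → ℝ} {z : Bool}
    (h : fpr P f z = fpr P g z) :
    ∑ x, f (x, z) * P (x, z, false) = ∑ x, g (x, z) * P (x, z, false) := by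
  by_cases hz : ∑ x, P (x, z, false) = 0
  · have h₀ : ∀ x, P (x, z, false) = 0 := fun x =>
      (sum_eq_zero_iff_of_nonneg fun x _ => hP (x, z, false)).1 hz x (mem_univ x)
    simp [h₀]
  · rwa [fpr, fpr, div_left_inj' hz] at h

lemma loss_sub_loss_eq {f g : X × Bool → ℝ}
    (h : ∀ z, ∑ x, f (x, z) * P (x, z, false) = ∑ x, g (x, z) * P (x, z, false)) :
    loss P g - loss P f =
      ∑ z, (∑ x, f (x, z) * P (x, z, true) - ∑ x, g (x, z) * P (x, z, true)) := by
  have hz : ∀ z, ∑ x, (f (x, z) - g (x, z)) * P (x, z, false) = 0 := fun z => by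
    simp only [sub_mul, sum_sub_distrib, h, sub_self]
  rw [loss, loss, sum_comm, sum_comm (γ := X), ← sum_sub_distrib]
  refine sum_congr rfl fun z _ => ?_
  rw [← sub_zero (∑ x, f (x, z) * P (x, z, true) - _), ← hz z]
  simp only [← sum_sub_distrib]
  exact sum_congr rfl fun x _ => by ring

end Fairness

theorem stmt11_general {X : Type*} [Fintype X] (P : X × Bool × Bool → ℝ) (hP : IsDist P)
    (hm : MergedScores P)
    (r : ℝ)
    (f : X × Bool → ℝ) (hf1 : InUnit f) (hf2 : IsPrefix P f)
    (hf4 : ∀ x z, 0 < cellMass P x z → score P x z = 1 → f (x, z) = 1)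
    (hf3 : ∀ z, fpr P f z = r)
    (g : X × Bool → ℝ) (hg1 : InUnit g) (hg3 : ∀ z, fpr P g z = r) :
    loss P f ≤ loss P g ∧
      ((∃ x z, 0 < cellMass P x z ∧ f (x, z) ≠ g (x, z)) → loss P f < loss P g) := by
  have hfp z := sum_mul_eq_of_fpr_eq hP.1 ((hf3 z).trans (hg3 z).symm)
  choose c hc hlrt using hf2.exists_isLikelihoodRatioTest hP.1 hf1 hf4
  have hg z : ∀ x, g (x, z) ∈ Set.Icc 0 1 := fun x => hg1 (x, z)
  have hgain z := sub_nonneg.2 ((hlrt z).sum_mul_le (hg z) (hfp z))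
  have hloss := loss_sub_loss_eq hfp
  refine ⟨by linarith [sum_nonneg fun z (_ : z ∈ univ) => hgain z], ?_⟩
  rintro ⟨x, z, hx, hne⟩
  have hx' : P (x, z, false) ≠ 0 ∨ P (x, z, true) ≠ 0 := by
    by_contra! h
    simp [cellMass, h.1, h.2] at hx
  have hstrict :=
    (hlrt z).sum_mul_lt (hg z) (hfp z) (hm.subsingleton_boundary hP.1 (hc z) z) hx' hne
  linarith [sum_pos' (fun z _ => hgain z) ⟨z, mem_univ z, sub_pos.2 hstrict⟩]

/-- Among randomized classifiers with false positive rate `r` on both groups (hence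
satisfying predictive equality), the group-wise mass-threshold classifier `f_r` (which
also accepts all score-1 cells, as in the definition of `f_0`) minimizes the 0-1 loss;
any competitor differing from it on a positive-mass point has strictly larger loss. -/
theorem stmt11 {X : Type*} [Fintype X] (P : X × Bool × Bool → ℝ) (hP : IsDist P)
    (hm : MergedScores P) (h0 : ∀ z, 0 < ∑ x, P (x, z, false))
    (r : ℝ) (hr : r ∈ Set.Icc (0 : ℝ) 1)
    (f : X × Bool → ℝ) (hf1 : InUnit f) (hf2 : IsPrefix P f)
    (hf4 : ∀ x z, 0 < cellMass P x z → score P x z = 1 → f (x, z) = 1)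
    (hf3 : ∀ z, fpr P f z = r)
    (g : X × Bool → ℝ) (hg1 : InUnit g) (hg3 : ∀ z, fpr P g z = r) :
    loss P f ≤ loss P g ∧
      ((∃ x z, 0 < cellMass P x z ∧ f (x, z) ≠ g (x, z)) → loss P f < loss P g) :=
  stmt11_general P hP hm r f hf1 hf2 hf4 hf3 g hg1 hg3
end
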